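/- Let 𝒜 = {A₁, A₂} be two finite cameras A_i = [G_i | t_i] with distinct centers c₁, c₂ (normalized with last coordinate 1), principal rays n₁, n₂, and epipoles e₁₂ = A₁c₂, e₂₁ = A₂c₁. Fix j ∈ {1,2} and let i be the other index. If n_iᵀc_j ≥ 0 (i.e., the center c_j has nonnegative depth in the camera A_i), then E_j ⊆ C_𝒜. Otherwise, the epipole pair (e₁₂, e₂₁) is the only point of E_j that lies in C_𝒜. -/

import Mathlib

/-!
If `p ∈ E_j` and `i` is the other index, then `p_i = c A_i c_j = c G_i b_ij` with `c ≠ 0`, so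
`a_i = c b_ij`. Every cross product `b × a_i` therefore vanishes, and the only chirality
inequality with content is the first one for `(i, j)`, which reads
`c² (n_iᵀ c_j) ‖b_ij × a_j‖² ≥ 0`. It holds when `n_iᵀ c_j ≥ 0`; otherwise it forces
`b_ij × a_j = 0`, i.e. `a_j ∥ b_ji`, which says that `p_j` represents the epipole `A_j c_i`.
-/

open Matrix

noncomputable section

/-- Left 3x3 block `G` of a 3x4 camera matrix `A = [G | t]`. -/
def leftBlock (A : Matrix (Fin 3) (Fin 4) ℝ) : Matrix (Fin 3) (Fin 3) ℝ :=
  Matrix.of fun i j => A i j.castSucc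

/-- Last column `t` of a 3x4 camera matrix `A = [G | t]`. -/
def tCol (A : Matrix (Fin 3) (Fin 4) ℝ) : Fin 3 → ℝ := fun i => A i 3

/-- A camera is finite if its left 3x3 block is invertible. -/
def FiniteCam (A : Matrix (Fin 3) (Fin 4) ℝ) : Prop := (leftBlock A).det ≠ 0

/-- The center `(-G⁻¹ t, 1)` of a finite camera. -/
def camCenter (A : Matrix (Fin 3) (Fin 4) ℝ) : Fin 4 → ℝ :=
  Fin.snoc (-((leftBlock A)⁻¹ *ᵥ tCol A)) 1

/-- The principal ray `det G • (third row of A)`. -/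
def principalRay (A : Matrix (Fin 3) (Fin 4) ℝ) : Fin 4 → ℝ :=
  (leftBlock A).det • A 2

/-- `n_∞ = (0,0,0,1)`. -/
def nInf : Fin 4 → ℝ := Fin.snoc (0 : Fin 3 → ℝ) 1

/-- The chiral domain `D_𝒜`: the closure, within `ℝ⁴ ∖ {0}` (i.e. ambient closure
intersected with `ℝ⁴ ∖ {0}`), of the set of finite vectors (last coordinate nonzero)
having positive depth in every camera of the arrangement. -/
def chiralDomain {m : ℕ} (A : Fin m → Matrix (Fin 3) (Fin 4) ℝ) : Set (Fin 4 → ℝ) :=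
  closure {q : Fin 4 → ℝ | nInf ⬝ᵥ q ≠ 0 ∧ ∀ i, 0 < (principalRay (A i) ⬝ᵥ q) * (nInf ⬝ᵥ q)}
    ∩ {q : Fin 4 → ℝ | q ≠ 0}

/-- The joint image `J_𝒜` (at the level of representatives): tuples of nonzero vectors
representing `(A₁ q, …, A_m q)` for some `q ∈ ℙ³` that is not a camera center. -/
def jointImage {m : ℕ} (A : Fin m → Matrix (Fin 3) (Fin 4) ℝ) :
    Set (Fin m → Fin 3 → ℝ) :=
  {p | (∀ i, p i ≠ 0) ∧
    ∃ q : Fin 4 → ℝ, q ≠ 0 ∧ ∀ i, ∃ c : ℝ, c ≠ 0 ∧ p i = c • (A i *ᵥ q)}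

/-- The chiral joint image `X_𝒜 = φ_𝒜(D_𝒜)` (at the level of representatives). -/
def chiralJointImage {m : ℕ} (A : Fin m → Matrix (Fin 3) (Fin 4) ℝ) :
    Set (Fin m → Fin 3 → ℝ) :=
  {p | (∀ i, p i ≠ 0) ∧
    ∃ q ∈ chiralDomain A, ∀ i, ∃ c : ℝ, c ≠ 0 ∧ p i = c • (A i *ᵥ q)}

/-- `a_i = G_i⁻¹ p_i`. -/
def aVec (A : Matrix (Fin 3) (Fin 4) ℝ) (p : Fin 3 → ℝ) : Fin 3 → ℝ :=
  (leftBlock A)⁻¹ *ᵥ p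

/-- `b_ij = G_i⁻¹ t_i - G_j⁻¹ t_j`. -/
def bVec (A B : Matrix (Fin 3) (Fin 4) ℝ) : Fin 3 → ℝ :=
  (leftBlock A)⁻¹ *ᵥ tCol A - (leftBlock B)⁻¹ *ᵥ tCol B

/-- The chirality constraint set `C_𝒜`, cut out by the biquadratic inequalities
`det(G_i)·p_{i3}·((a_i × a_j)ᵀ(b_ij × a_j)) ≥ 0` and
`det(G_i)·det(G_j)·p_{i3}·p_{j3}·((b_ij × a_i)ᵀ(b_ij × a_j)) ≥ 0` for all `i, j`. -/
def CSet {m : ℕ} (A : Fin m → Matrix (Fin 3) (Fin 4) ℝ) :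
    Set (Fin m → Fin 3 → ℝ) :=
  {p | ∀ i j,
    0 ≤ (leftBlock (A i)).det * p i 2 *
        ((aVec (A i) (p i) ⨯₃ aVec (A j) (p j)) ⬝ᵥ (bVec (A i) (A j) ⨯₃ aVec (A j) (p j))) ∧
    0 ≤ (leftBlock (A i)).det * (leftBlock (A j)).det * p i 2 * p j 2 *
        ((bVec (A i) (A j) ⨯₃ aVec (A i) (p i)) ⬝ᵥ (bVec (A i) (A j) ⨯₃ aVec (A j) (p j)))}

/-- `E_j`: tuples whose `i`-th coordinate, for `i ≠ j`, represents the epipole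
`e_ij = A_i c_j`, with free `j`-th coordinate. -/
def Eset {m : ℕ} (A : Fin m → Matrix (Fin 3) (Fin 4) ℝ) (j : Fin m) :
    Set (Fin m → Fin 3 → ℝ) :=
  {p | (∀ i, p i ≠ 0) ∧ ∀ i, i ≠ j → ∃ c : ℝ, c ≠ 0 ∧ p i = c • (A i *ᵥ camCenter (A j))}

lemma cross_eq_zero_iff_exists_smul {F : Type*} [Field F] {v w : Fin 3 → F} (hv : v ≠ 0) :
    v ⨯₃ w = 0 ↔ ∃ a : F, a • v = w := by
  rw [← not_iff_not, ← ne_eq, crossProduct_ne_zero_iff_linearIndependent,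
    LinearIndependent.pair_iff' hv, not_exists]

lemma dotProduct_self_nonneg {n R : Type*} [Fintype n] [Ring R] [LinearOrder R]
    [IsStrictOrderedRing R] (v : n → R) : 0 ≤ v ⬝ᵥ v :=
  Finset.sum_nonneg fun _ _ => mul_self_nonneg _

lemma bVec_swap (A B : Matrix (Fin 3) (Fin 4) ℝ) : bVec B A = -bVec A B :=
  (neg_sub _ _).symm

lemma bVec_self (A : Matrix (Fin 3) (Fin 4) ℝ) : bVec A A = 0 :=
  sub_self _

lemma mulVec_snoc_one (A : Matrix (Fin 3) (Fin 4) ℝ) (x : Fin 3 → ℝ) :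
    A *ᵥ Fin.snoc x 1 = leftBlock A *ᵥ x + tCol A := by
  ext r
  simp only [mulVec, dotProduct, Fin.sum_univ_castSucc (n := 3), Fin.snoc_castSucc, Fin.snoc_last,
    mul_one]
  rfl

lemma principalRay_dotProduct (A : Matrix (Fin 3) (Fin 4) ℝ) (q : Fin 4 → ℝ) :
    principalRay A ⬝ᵥ q = (leftBlock A).det * (A *ᵥ q) 2 := by
  rw [principalRay, smul_dotProduct, smul_eq_mul]
  rfl

section Camera

variable {A B : Matrix (Fin 3) (Fin 4) ℝ}

lemma bVec_ne_zero_of_camCenter_ne (h : camCenter A ≠ camCenter B) : bVec A B ≠ 0 := by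
  intro hb
  exact h (by rw [camCenter, camCenter, sub_eq_zero.mp hb])

lemma leftBlock_mulVec_aVec (hA : FiniteCam A) (p : Fin 3 → ℝ) : leftBlock A *ᵥ aVec A p = p := by
  rw [aVec, mulVec_mulVec, mul_nonsing_inv _ (isUnit_iff_ne_zero.mpr hA), one_mulVec]

lemma aVec_smul_leftBlock_mulVec (hA : FiniteCam A) (c : ℝ) (v : Fin 3 → ℝ) :
    aVec A (c • (leftBlock A *ᵥ v)) = c • v := by
  rw [aVec, mulVec_smul, mulVec_mulVec, nonsing_inv_mul _ (isUnit_iff_ne_zero.mpr hA), one_mulVec]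

lemma mulVec_camCenter (hA : FiniteCam A) (B : Matrix (Fin 3) (Fin 4) ℝ) :
    A *ᵥ camCenter B = leftBlock A *ᵥ bVec A B := by
  rw [camCenter, mulVec_snoc_one, bVec, mulVec_sub, mulVec_neg,
    show leftBlock A *ᵥ ((leftBlock A)⁻¹ *ᵥ tCol A) = tCol A from leftBlock_mulVec_aVec hA _]
  abel

lemma aVec_smul_mulVec_camCenter (hA : FiniteCam A) (c : ℝ) (B : Matrix (Fin 3) (Fin 4) ℝ) :
    aVec A (c • (A *ᵥ camCenter B)) = c • bVec A B := by
  rw [mulVec_camCenter hA, aVec_smul_leftBlock_mulVec hA]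

lemma cross_aVec_eq_zero_iff (hB : FiniteCam B) (hb : bVec A B ≠ 0) {q : Fin 3 → ℝ} (hq : q ≠ 0) :
    bVec A B ⨯₃ aVec B q = 0 ↔ ∃ c : ℝ, c ≠ 0 ∧ q = c • (B *ᵥ camCenter A) := by
  rw [cross_eq_zero_iff_exists_smul hb, mulVec_camCenter hB, bVec_swap A B, mulVec_neg]
  constructor
  · rintro ⟨a, ha⟩
    have hqa : q = a • (leftBlock B *ᵥ bVec A B) := by
      rw [← leftBlock_mulVec_aVec hB q, ← ha, mulVec_smul]
    refine ⟨-a, fun ha0 => hq ?_, by rw [hqa, neg_smul_neg]⟩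
    rw [hqa, neg_eq_zero.mp ha0, zero_smul]
  · rintro ⟨c, -, rfl⟩
    exact ⟨-c, by simp only [smul_neg, ← neg_smul, aVec_smul_leftBlock_mulVec hB]⟩

end Camera

def ChiralityIneqs (A B : Matrix (Fin 3) (Fin 4) ℝ) (p q : Fin 3 → ℝ) : Prop :=
  0 ≤ (leftBlock A).det * p 2 * ((aVec A p ⨯₃ aVec B q) ⬝ᵥ (bVec A B ⨯₃ aVec B q)) ∧
    0 ≤ (leftBlock A).det * (leftBlock B).det * p 2 * q 2 *
      ((bVec A B ⨯₃ aVec A p) ⬝ᵥ (bVec A B ⨯₃ aVec B q))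

lemma chiralityIneqs_self (A : Matrix (Fin 3) (Fin 4) ℝ) (p : Fin 3 → ℝ) :
    ChiralityIneqs A A p p := by
  simp [ChiralityIneqs, cross_self, bVec_self]

lemma mem_CSet_two_iff {A : Fin 2 → Matrix (Fin 3) (Fin 4) ℝ} {p : Fin 2 → Fin 3 → ℝ}
    {i j : Fin 2} (hij : i ≠ j) :
    p ∈ CSet A ↔
      ChiralityIneqs (A i) (A j) (p i) (p j) ∧ ChiralityIneqs (A j) (A i) (p j) (p i) := by
  refine ⟨fun h => ⟨h i j, h j i⟩, fun ⟨hij', hji'⟩ k l => ?_⟩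
  have hk : k = i ∨ k = j := by omega
  have hl : l = i ∨ l = j := by omega
  rcases hk with rfl | rfl <;> rcases hl with rfl | rfl
  exacts [chiralityIneqs_self _ _, hij', hji', chiralityIneqs_self _ _]

section Epipole

variable {A B : Matrix (Fin 3) (Fin 4) ℝ}

lemma chiralityIneqs_left_epipole_iff (hA : FiniteCam A) {c : ℝ} (hc : c ≠ 0) (q : Fin 3 → ℝ) :
    ChiralityIneqs A B (c • (A *ᵥ camCenter B)) q ↔
      0 ≤ (principalRay A ⬝ᵥ camCenter B) *
        ((bVec A B ⨯₃ aVec B q) ⬝ᵥ (bVec A B ⨯₃ aVec B q)) := by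
  have hcoord : (c • (A *ᵥ camCenter B)) 2 = c * (A *ᵥ camCenter B) 2 := rfl
  simp only [ChiralityIneqs, aVec_smul_mulVec_camCenter hA, hcoord, map_smul, LinearMap.smul_apply,
    cross_self, smul_zero, zero_dotProduct, mul_zero, le_refl, and_true, smul_dotProduct,
    smul_eq_mul, principalRay_dotProduct]
  set w := bVec A B ⨯₃ aVec B q
  rw [show (leftBlock A).det * (c * (A *ᵥ camCenter B) 2) * (c * (w ⬝ᵥ w))
      = c ^ 2 * ((leftBlock A).det * (A *ᵥ camCenter B) 2 * (w ⬝ᵥ w)) by ring,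
    mul_nonneg_iff_of_pos_left (by positivity)]

lemma chiralityIneqs_right_epipole (hA : FiniteCam A) (c : ℝ) (q : Fin 3 → ℝ) :
    ChiralityIneqs B A q (c • (A *ᵥ camCenter B)) := by
  simp only [ChiralityIneqs, aVec_smul_mulVec_camCenter hA, bVec_swap A B, map_neg,
    LinearMap.neg_apply, map_smul, cross_self, smul_zero, neg_zero, dotProduct_zero, mul_zero,
    le_refl, and_self]

end Epipole

lemma mem_CSet_iff_of_mem_Eset {A : Fin 2 → Matrix (Fin 3) (Fin 4) ℝ} {i j : Fin 2}
    (hA : FiniteCam (A i)) (hij : i ≠ j) {p : Fin 2 → Fin 3 → ℝ} (hp : p ∈ Eset A j) :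
    p ∈ CSet A ↔ 0 ≤ (principalRay (A i) ⬝ᵥ camCenter (A j)) *
      ((bVec (A i) (A j) ⨯₃ aVec (A j) (p j)) ⬝ᵥ (bVec (A i) (A j) ⨯₃ aVec (A j) (p j))) := by
  obtain ⟨c, hc, hpi⟩ := hp.2 i hij
  rw [mem_CSet_two_iff hij, hpi, chiralityIneqs_left_epipole_iff hA hc,
    and_iff_left (chiralityIneqs_right_epipole hA c _)]

lemma epipolePair_iff_of_mem_Eset {A : Fin 2 → Matrix (Fin 3) (Fin 4) ℝ} {j : Fin 2}
    {p : Fin 2 → Fin 3 → ℝ} (hp : p ∈ Eset A j) :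
    ((∃ c : ℝ, c ≠ 0 ∧ p 0 = c • (A 0 *ᵥ camCenter (A 1))) ∧
      (∃ c : ℝ, c ≠ 0 ∧ p 1 = c • (A 1 *ᵥ camCenter (A 0)))) ↔
      ∃ c : ℝ, c ≠ 0 ∧ p j = c • (A j *ᵥ camCenter (A (j + 1))) := by
  fin_cases j
  exacts [and_iff_left (hp.2 1 (by decide)), and_iff_right (hp.2 0 (by decide))]

/-- for a pair of finite cameras with distinct centers and `j ∈ {1,2}` with
other index `i`: if the center `c_j` has nonnegative depth in `A_i` (i.e. `n_iᵀc_j ≥ 0`)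
then `E_j ⊆ C_𝒜`; otherwise the epipole pair `(e₁₂, e₂₁)` is the only point of `E_j`
lying in `C_𝒜`. -/
theorem Eset_and_CSet_two_views
    (A : Fin 2 → Matrix (Fin 3) (Fin 4) ℝ)
    (hfin : ∀ i, FiniteCam (A i))
    (hdist : camCenter (A 0) ≠ camCenter (A 1))
    (j : Fin 2) :
    (0 ≤ principalRay (A (j + 1)) ⬝ᵥ camCenter (A j) → Eset A j ⊆ CSet A) ∧
    (principalRay (A (j + 1)) ⬝ᵥ camCenter (A j) < 0 →
      ∀ p ∈ Eset A j, (p ∈ CSet A ↔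
        (∃ c : ℝ, c ≠ 0 ∧ p 0 = c • (A 0 *ᵥ camCenter (A 1))) ∧
        (∃ c : ℝ, c ≠ 0 ∧ p 1 = c • (A 1 *ᵥ camCenter (A 0))))) := by
  have hij : j + 1 ≠ j := by fin_cases j <;> decide
  have hb : bVec (A (j + 1)) (A j) ≠ 0 := by
    apply bVec_ne_zero_of_camCenter_ne
    fin_cases j
    exacts [hdist.symm, hdist]
  refine ⟨fun hdepth p hp => ?_, fun hdepth p hp => ?_⟩
  · rw [mem_CSet_iff_of_mem_Eset (hfin _) hij hp]
    exact mul_nonneg hdepth (dotProduct_self_nonneg _)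
  · rw [mem_CSet_iff_of_mem_Eset (hfin _) hij hp, epipolePair_iff_of_mem_Eset hp,
      ← cross_aVec_eq_zero_iff (hfin j) hb (hp.1 j), ← neg_mul_neg,
      mul_nonneg_iff_of_pos_left (neg_pos.mpr hdepth), neg_nonneg,
      LE.le.ge_iff_eq' (dotProduct_self_nonneg _), dotProduct_self_eq_zero]
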